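/- If the covering radius of PRS(q+1,k) equals q-k+1, then there exists an MDS code of length q+2 and dimension k+1 over F_q. -/

import Mathlib

/-! A deep hole `w` of `PRS(q+1,k)` lies at distance at least `q-k+1` from every codeword, so a
word `(t, c + t • w)` of `C_w` with `t ≠ 0` has weight at least `1 + (q-k+1)`, while for `t = 0`
it is a nonzero PRS codeword, of weight at least `q+2-k` because a nonzero polynomial of degree
`< k` has at most `k-1` zeros on the projective line. The bound is attained at `(1, w - c₀)` for
a codeword `c₀` nearest to `w`, and the extra coordinate makes `w` independent of the code, so
`C_w` has dimension `k+1`. -/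

open Polynomial

/-- Error distance of a word `u` to a code `C`: minimum Hamming distance to a codeword. -/
noncomputable def errDist {ι F : Type*} [Fintype ι] [DecidableEq F]
    (C : Set (ι → F)) (u : ι → F) : ℕ :=
  sInf (hammingDist u '' C)

/-- Covering radius of a code: maximum error distance over all words. -/
noncomputable def covRad {ι F : Type*} [Fintype ι] [DecidableEq F]
    (C : Set (ι → F)) : ℕ :=
  sSup (Set.range (errDist C))

/-- Minimum distance of a code: minimum Hamming weight of a nonzero codeword. -/
noncomputable def minDist {ι F : Type*} [Fintype ι] [DecidableEq F] [Zero F]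
    (C : Set (ι → F)) : ℕ :=
  sInf (hammingNorm '' (C \ {0}))

/-- Reed-Solomon code: evaluations of polynomials of degree `< k` at the points `x i`. -/
def RSCode (F : Type*) [Field F] {ι : Type*} (x : ι → F) (k : ℕ) : Set (ι → F) :=
  {u | ∃ f : F[X], f.degree < (k : WithBot ℕ) ∧ ∀ i, u i = f.eval (x i)}

/-- Projective Reed-Solomon code of length `q+1` (words indexed by `Option F`,
with `none` the point at infinity carrying the coefficient of `X^(k-1)`). -/
def PRSCode (F : Type*) [Field F] (k : ℕ) : Set (Option F → F) :=
  {w | ∃ g : F[X], g.degree < (k : WithBot ℕ) ∧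
    (∀ a : F, w (some a) = g.eval a) ∧ w none = g.coeff (k - 1)}

section Coding

variable {ι F : Type*} [Fintype ι] [DecidableEq F]

theorem errDist_le_hammingDist {C : Set (ι → F)} {c : ι → F} (hc : c ∈ C) (u : ι → F) :
    errDist C u ≤ hammingDist u c :=
  Nat.sInf_le ⟨c, hc, rfl⟩

theorem exists_hammingDist_eq_errDist {C : Set (ι → F)} (hC : C.Nonempty) (u : ι → F) :
    ∃ c ∈ C, hammingDist u c = errDist C u :=
  Nat.sInf_mem (hC.image _)

theorem exists_errDist_eq_covRad {C : Set (ι → F)} (hC : C.Nonempty) :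
    ∃ w, errDist C w = covRad C := by
  have hbdd : BddAbove (Set.range (errDist C)) := by
    refine ⟨Fintype.card ι, ?_⟩
    rintro _ ⟨u, rfl⟩
    obtain ⟨c, -, hc⟩ := exists_hammingDist_eq_errDist hC u
    exact hc ▸ hammingDist_le_card_fintype
  exact Nat.sSup_mem (s := Set.range (errDist C)) ⟨_, hC.some, rfl⟩ hbdd

end Coding

theorem hammingNorm_comp_equiv {ι κ β : Type*} [Fintype ι] [Fintype κ] [Zero β] [DecidableEq β]
    (v : ι → β) (e : κ ≃ ι) : hammingNorm (v ∘ e) = hammingNorm v :=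
  Finset.card_equiv e (by simp)

theorem hammingNorm_option {ι β : Type*} [Fintype ι] [Zero β] [DecidableEq β]
    (v : Option ι → β) :
    hammingNorm v = hammingNorm (v ∘ some) + if v none = 0 then 0 else 1 := by
  simp only [hammingNorm, Finset.card_filter, Fintype.sum_option, Function.comp_apply]
  split_ifs <;> simp_all [add_comm]

theorem minDist_map_funCongrLeft {ι κ F : Type*} [Fintype ι] [Fintype κ] [Field F]
    [DecidableEq F] (e : κ ≃ ι) (C : Submodule F (ι → F)) :
    minDist (C.map (LinearEquiv.funCongrLeft F F e).toLinearMap : Set (κ → F)) =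
      minDist (C : Set (ι → F)) := by
  set R := LinearEquiv.funCongrLeft F F e
  have hdiff : (R '' C) \ {0} = R '' ((C : Set (ι → F)) \ {0}) := by
    rw [Set.image_sdiff R.injective, Set.image_singleton, map_zero]
  simp only [minDist, Submodule.map_coe, LinearEquiv.coe_coe, hdiff, Set.image_image]
  congr 1
  exact Set.image_congr fun v _ => hammingNorm_comp_equiv v e

section Extension

variable {ι F : Type*} [Field F]

/-- The extra coordinate `none` carries `t`: the word `w` is extended by `1`, the code `C` by `0`. -/
def appendCoord (C : Submodule F (ι → F)) (w : ι → F) : C × F →ₗ[F] (Option ι → F) where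
  toFun p o := o.elim p.2 ((p.1 : ι → F) + p.2 • w)
  map_add' p q := by
    funext o
    cases o
    · simp
    · simp [add_smul]; abel
  map_smul' s p := by
    funext o
    cases o <;> simp [mul_smul, mul_add]

/-- The code `C_w = F·(1, w) ⊕ (0, C)`. -/
def extendCode (C : Submodule F (ι → F)) (w : ι → F) : Submodule F (Option ι → F) :=
  LinearMap.range (appendCoord C w)

theorem appendCoord_injective (C : Submodule F (ι → F)) (w : ι → F) :
    Function.Injective (appendCoord C w) := by
  rw [← LinearMap.ker_eq_bot, LinearMap.ker_eq_bot']
  rintro ⟨c, t⟩ h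
  have ht : t = 0 := congrFun h none
  have hc : (c : ι → F) = 0 := funext fun i => by simpa [appendCoord, ht] using congrFun h (some i)
  simp [ht, Submodule.coe_eq_zero.1 hc]

variable [Fintype ι]

theorem finrank_extendCode (C : Submodule F (ι → F)) (w : ι → F) :
    Module.finrank F (extendCode C w) = Module.finrank F C + 1 := by
  rw [extendCode, LinearMap.finrank_range_of_inj (appendCoord_injective C w),
    Module.finrank_prod, Module.finrank_self]

variable [DecidableEq F]

theorem hammingNorm_appendCoord (C : Submodule F (ι → F)) (w : ι → F) (c : C) (t : F) :
    hammingNorm (appendCoord C w (c, t)) =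
      hammingNorm ((c : ι → F) + t • w) + if t = 0 then 0 else 1 :=
  hammingNorm_option _

/-- For `t ≠ 0`, `c + t • w` is `t` times the difference of `w` and the codeword `-t⁻¹ • c`. -/
theorem errDist_le_hammingNorm_add_smul (C : Submodule F (ι → F)) (w : ι → F) (c : C)
    {t : F} (ht : t ≠ 0) : errDist (C : Set (ι → F)) w ≤ hammingNorm ((c : ι → F) + t • w) := by
  have hmem : -(t⁻¹ • (c : ι → F)) ∈ C := C.neg_mem (C.smul_mem _ c.2)
  calc errDist (C : Set (ι → F)) w ≤ hammingDist w (-(t⁻¹ • (c : ι → F))) :=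
        errDist_le_hammingDist hmem w
    _ = hammingNorm (t⁻¹ • ((c : ι → F) + t • w)) := by
        rw [hammingDist_comm, hammingDist_eq_hammingNorm, neg_neg, smul_add, smul_smul,
          inv_mul_cancel₀ ht, one_smul]
    _ = hammingNorm ((c : ι → F) + t • w) :=
        hammingNorm_smul (fun _ => IsSMulRegular.of_ne_zero (inv_ne_zero ht)) _

theorem minDist_extendCode (C : Submodule F (ι → F)) (w : ι → F)
    (hC : ∀ c ∈ C, c ≠ 0 → errDist (C : Set (ι → F)) w + 1 ≤ hammingNorm c) :
    minDist (extendCode C w : Set (Option ι → F)) = errDist (C : Set (ι → F)) w + 1 := by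
  refine IsLeast.csInf_eq ⟨?_, ?_⟩
  · obtain ⟨c₀, hc₀, hdist⟩ := exists_hammingDist_eq_errDist ⟨0, C.zero_mem⟩ w
    refine ⟨appendCoord C w (-⟨c₀, hc₀⟩, 1), ⟨⟨_, rfl⟩, fun h0 => ?_⟩, ?_⟩
    · simpa [appendCoord] using congrFun h0 none
    · rw [hammingNorm_appendCoord, ← hdist, hammingDist_comm, hammingDist_eq_hammingNorm]
      simp
  · rintro _ ⟨_, ⟨⟨⟨c, t⟩, rfl⟩, hne⟩, rfl⟩
    rw [hammingNorm_appendCoord]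
    by_cases ht : t = 0
    · subst ht
      have hc : (c : ι → F) ≠ 0 := fun h0 =>
        hne (funext fun o => by cases o <;> simp [appendCoord, h0])
      simpa using hC c c.2 hc
    · simpa [if_neg ht] using errDist_le_hammingNorm_add_smul C w c ht

end Extension

theorem card_sub_natDegree_le_hammingNorm_eval {R : Type*} [CommRing R] [IsDomain R] [Fintype R]
    [DecidableEq R] {g : R[X]} (hg : g ≠ 0) :
    Fintype.card R - g.natDegree ≤ hammingNorm fun a => g.eval a := by
  have hroots : (Finset.univ.filter fun a => g.eval a = 0).card ≤ g.natDegree :=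
    card_le_degree_of_subset_roots fun a ha => by simpa [mem_roots hg] using ha
  have hsplit := Finset.card_filter_add_card_filter_not (s := Finset.univ) fun a => g.eval a = 0
  rw [Finset.card_univ] at hsplit
  simp only [hammingNorm, ne_eq]
  omega

section ProjectiveReedSolomon

variable (F : Type*) [Field F]

noncomputable def prsEval (k : ℕ) : F[X] →ₗ[F] (Option F → F) :=
  LinearMap.pi fun o => o.elim (lcoeff F (k - 1)) leval

noncomputable def prsCode (k : ℕ) : Submodule F (Option F → F) :=
  (degreeLT F k).map (prsEval F k)

theorem coe_prsCode (k : ℕ) : (prsCode F k : Set (Option F → F)) = PRSCode F k := by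
  ext v
  constructor
  · rintro ⟨g, hg, rfl⟩
    exact ⟨g, mem_degreeLT.1 hg, fun a => rfl, rfl⟩
  · rintro ⟨g, hg, hsome, hnone⟩
    exact ⟨g, mem_degreeLT.2 hg, funext fun o => o.rec hnone.symm fun a => (hsome a).symm⟩

variable {F} [Fintype F] [DecidableEq F]

/-- A nonzero `g` of degree `< k` has at most `natDegree g ≤ k - 1` roots in `F`, and if its
coordinate at infinity vanishes too, then `natDegree g < k - 1`. -/
theorem card_add_two_sub_le_hammingNorm_prsEval {k : ℕ} {g : F[X]} (hg : g ≠ 0)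
    (hdeg : g.degree < k) : Fintype.card F + 2 - k ≤ hammingNorm (prsEval F k g) := by
  have hlt : g.natDegree < k := (natDegree_lt_iff_degree_lt hg).2 hdeg
  have hinf : g.coeff (k - 1) = 0 → g.natDegree ≠ k - 1 := fun h0 hk =>
    hg (leadingCoeff_eq_zero.1 (by rwa [leadingCoeff, hk]))
  have hfin : Fintype.card F - g.natDegree ≤ hammingNorm fun a => g.eval a :=
    card_sub_natDegree_le_hammingNorm_eval hg
  rw [hammingNorm_option]
  change _ ≤ hammingNorm (fun a => g.eval a) + if g.coeff (k - 1) = 0 then 0 else 1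
  by_cases hc : g.coeff (k - 1) = 0
  · have := hinf hc
    rw [if_pos hc]
    omega
  · rw [if_neg hc]
    omega

theorem finrank_prsCode {k : ℕ} (hk : k ≤ Fintype.card F) :
    Module.finrank F (prsCode F k) = k := by
  have hinj : Function.Injective ((prsEval F k).domRestrict (degreeLT F k)) := by
    rw [← LinearMap.ker_eq_bot, LinearMap.ker_eq_bot']
    intro g hg
    by_contra hne
    have hwt := card_add_two_sub_le_hammingNorm_prsEval (mt Submodule.coe_eq_zero.1 hne)
      (mem_degreeLT.1 g.2)
    have h0 : prsEval F k g = 0 := hg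
    rw [h0, hammingNorm_zero] at hwt
    omega
  rw [prsCode, ← LinearMap.range_domRestrict, LinearMap.finrank_range_of_inj hinj,
    (degreeLTEquiv F k).finrank_eq, Module.finrank_fin_fun]

end ProjectiveReedSolomon

theorem mds_of_prs_covRad_general {F : Type*} [Field F] [Fintype F] [DecidableEq F] {k : ℕ}
    (hk : k ≤ Fintype.card F - 2)
    (h : covRad (PRSCode F k) = Fintype.card F - k + 1) :
    ∃ C : Submodule F (Fin (Fintype.card F + 2) → F),
      Module.finrank F C = k + 1 ∧
      minDist (C : Set (Fin (Fintype.card F + 2) → F)) =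
        (Fintype.card F + 2) - (k + 1) + 1 := by
  obtain ⟨w, hw⟩ := exists_errDist_eq_covRad (C := (prsCode F k : Set (Option F → F)))
    ⟨0, (prsCode F k).zero_mem⟩
  rw [coe_prsCode, h] at hw
  have hwt : ∀ c ∈ prsCode F k, c ≠ 0 →
      errDist (prsCode F k : Set (Option F → F)) w + 1 ≤ hammingNorm c := by
    rintro _ ⟨g, hg, rfl⟩ hc
    have := card_add_two_sub_le_hammingNorm_prsEval (by rintro rfl; exact hc (map_zero _))
      (mem_degreeLT.1 hg)
    rw [coe_prsCode, hw]
    omega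
  let e : Fin (Fintype.card F + 2) ≃ Option (Option F) := Fintype.equivOfCardEq (by simp)
  refine ⟨(extendCode (prsCode F k) w).map (LinearEquiv.funCongrLeft F F e).toLinearMap, ?_, ?_⟩
  · rw [LinearEquiv.finrank_map_eq, finrank_extendCode, finrank_prsCode (by omega)]
  · rw [minDist_map_funCongrLeft, minDist_extendCode _ _ hwt, coe_prsCode, hw]
    omega

/-- If the covering radius of `PRS(q+1,k)` equals `q-k+1`, then there exists an MDS code
of length `q+2` and dimension `k+1` over `F_q`. -/
theorem mds_of_prs_covRad {F : Type*} [Field F] [Fintype F] [DecidableEq F] {k : ℕ}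
    (hq : Odd (Fintype.card F)) (hk2 : 2 ≤ k) (hk : k ≤ Fintype.card F - 2)
    (h : covRad (PRSCode F k) = Fintype.card F - k + 1) :
    ∃ C : Submodule F (Fin (Fintype.card F + 2) → F),
      Module.finrank F C = k + 1 ∧
      minDist (C : Set (Fin (Fintype.card F + 2) → F)) =
        (Fintype.card F + 2) - (k + 1) + 1 :=
  mds_of_prs_covRad_general hk h
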